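/- arXiv:2203.11366 — 8 statements merged into one kernel-verified Lean document; each statement's English description precedes it below -/
import Mathlib

section
/- Let k ≠ 0 and B be integers, and let (c,d) be an integral point on y² = x³ + kB², i.e. d² = c³ + kB². Let M be a positive integer dividing B with gcd(M, c) = 1. Then there exists an integer w such that M² divides all coefficients of f(Mx + wy, y), where f(x,y) = x³ − 3c x y² + 2d y³; that is, M² ∣ 3M(w² − c) and M² ∣ (w³ − 3cw + 2d). Explicitly, any w with cw ≡ d (mod M²) works. -/
/-- Discriminant-lowering: given an integral point `(c,d)` on `y² = x³ + kB²`
and `M ∣ B` with `gcd(M,c) = 1`, there exists `w` with `cw ≡ d (mod M²)`, and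
for any such `w` the coefficients `3M(w²−c)` and `w³−3cw+2d` of
`f(Mx+wy, y)` (where `f(x,y) = x³ − 3cxy² + 2dy³`) are divisible by `M²`. -/
theorem discriminant_lowering_exists_w (k B c d M : ℤ) (hk : k ≠ 0)
    (hP : d^2 = c^3 + k*B^2) (hM : 0 < M) (hMB : M ∣ B)
    (hcop : IsCoprime M c) :
    (∃ w : ℤ, c*w ≡ d [ZMOD M^2]) ∧
    ∀ w : ℤ, c*w ≡ d [ZMOD M^2] →
      M^2 ∣ 3*M*(w^2 - c) ∧ M^2 ∣ (w^3 - 3*c*w + 2*d) := by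
  obtain ⟨b, hb⟩ := hMB
  constructor
  · have h2 : IsCoprime (M^2) c := hcop.pow_left
    obtain ⟨u, v, huv⟩ := h2
    refine ⟨v*d, (Int.modEq_iff_dvd).2 ⟨u*d, ?_⟩⟩
    linear_combination -d * huv
  · intro w hw
    obtain ⟨t, ht⟩ : M^2 ∣ c*w - d := by
      rcases (Int.modEq_iff_dvd).1 hw with ⟨t, ht⟩
      exact ⟨-t, by linarith⟩
    have hcop2 : IsCoprime (M^2) (c^2) := hcop.pow
    have hcop3 : IsCoprime (M^2) (c^3) := hcop.pow
    have hc2 : M^2 ∣ c^2 * (w^2 - c) := by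
      refine ⟨t*(c*w+d) + k*b^2, ?_⟩
      linear_combination (c*w+d) * ht + hP + k*(B+M*b) * hb
    have hc3 : M^2 ∣ c^3 * (w^3 - 3*c*w + 2*d) := by
      refine ⟨d*k*b^2 + t*(3*d^2 + 3*d*M^2*t + M^4*t^2 - 3*c^3), ?_⟩
      linear_combination ((c*w)^2 + c*w*(d+M^2*t) + (d+M^2*t)^2 - 3*c^3) * ht + d * hP + d*k*(B+M*b) * hb
    refine ⟨?_, hcop3.dvd_of_dvd_mul_left hc3⟩
    exact dvd_mul_of_dvd_right (hcop2.dvd_of_dvd_mul_left hc2) _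
end

section
/- Let c, d, k, B, M be integers with d² = c³ + kB², M ∣ B, gcd(c, M) = 1, and let w be an integer with cw ≡ d (mod M²). Then M² divides w³ − 3cw + 2d. -/
/-- If `d² = c³ + kB²`, `M ∣ B`, `gcd(c,M) = 1` and `cw ≡ d (mod M²)`,
then `M² ∣ w³ − 3cw + 2d`. -/
theorem M_sq_dvd_cubic_coeff (c d k B M w : ℤ) (hP : d^2 = c^3 + k*B^2)
    (hMB : M ∣ B) (hcop : IsCoprime c M) (hw : c*w ≡ d [ZMOD M^2]) :
    M^2 ∣ (w^3 - 3*c*w + 2*d) := by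
  obtain ⟨p, hp⟩ : M^2 ∣ (c*w - d) := dvd_sub_comm.mp hw.dvd
  obtain ⟨q, hq⟩ : M^2 ∣ (c^3 - d^2) := by
    obtain ⟨b, hb⟩ : M^2 ∣ B^2 := pow_dvd_pow_of_dvd hMB 2
    exact ⟨-(k*b), by rw [hP, hb]; ring⟩
  have H : M^2 ∣ c^3 * (w^3 - 3*c*w + 2*d) := by
    refine ⟨3*d*M^2*p^2 + M^4*p^3 - q*d - 3*M^2*q*p, ?_⟩
    linear_combination (3*d*(c*w-d+M^2*p) + ((c*w-d)^2+(c*w-d)*(M^2*p)+M^4*p^2)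
      - 3*(c^3-d^2)) * hp + (-d - 3*M^2*p) * hq
  exact ((hcop.symm.pow (m := 2) (n := 3))).dvd_of_dvd_mul_left H
end

section
/- Let d, c, k, B be integers with d² = c³ + kB². If p is an odd prime satisfying v_p(B) > v_p(c) ≥ 1 (where v_p denotes the p-adic valuation), then p³ divides B. -/
/-- If `d² = c³ + kB²` and `p` is an odd prime with
`v_p(B) > v_p(c) ≥ 1`, then `p³ ∣ B`. -/
theorem cube_dvd_of_val_gt (d c k B : ℤ) (p : ℕ) (hp : p.Prime) (hodd : Odd p)
    (hP : d^2 = c^3 + k*B^2)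
    (hgt : padicValInt p B > padicValInt p c) (hge : 1 ≤ padicValInt p c) :
    (p : ℤ)^3 ∣ B := by
  haveI : Fact p.Prime := ⟨hp⟩
  have hB0 : B ≠ 0 := by rintro rfl; simp [padicValInt] at hgt
  have hc0 : c ≠ 0 := by rintro rfl; simp [padicValInt] at hge
  rw [padicValInt_dvd_iff]
  right
  by_contra hlt
  push_neg at hlt
  have ha1 : padicValInt p c = 1 := by omega
  have hb2 : padicValInt p B = 2 := by omega
  have hBd : (p:ℤ)^2 ∣ B := (padicValInt_dvd_iff 2 B).mpr (Or.inr (le_of_eq hb2.symm))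
  have hcd : (p:ℤ) ∣ c := by
    have := (padicValInt_dvd_iff 1 c).mpr (Or.inr hge)
    simpa using this
  have hc30 : c^3 ≠ 0 := pow_ne_zero 3 hc0
  have hc3 : padicValInt p (c^3) = 3 := by
    have : c^3 = c * c * c := by ring
    rw [this, padicValInt.mul (mul_ne_zero hc0 hc0) hc0, padicValInt.mul hc0 hc0, ha1]
  have hB4 : (p:ℤ)^4 ∣ k * B^2 := by
    have : (p:ℤ)^4 ∣ B^2 := by
      have := pow_dvd_pow_of_dvd hBd 2
      rwa [← pow_mul] at this
    exact Dvd.dvd.mul_left this k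
  have hnot : ¬ (p:ℤ)^4 ∣ c^3 := by
    intro h
    rcases (padicValInt_dvd_iff 4 (c^3)).mp h with h' | h'
    · exact hc30 h'
    · omega
  rcases eq_or_ne d 0 with rfl | hd0
  · apply hnot
    have : c^3 = -(k * B^2) := by linarith [hP]
    rw [this]
    exact dvd_neg.mpr hB4
  · have hd2 : (p:ℤ)^3 ∣ d^2 := by
      rw [hP]
      refine dvd_add ?_ (dvd_trans (pow_dvd_pow _ (by norm_num)) hB4)
      exact dvd_trans (pow_dvd_pow _ le_rfl) (pow_dvd_pow_of_dvd hcd 3)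
    have hvd : 3 ≤ padicValInt p (d^2) := by
      rcases (padicValInt_dvd_iff 3 (d^2)).mp hd2 with h' | h'
      · exact absurd h' (pow_ne_zero 2 hd0)
      · exact h'
    have hvd2 : padicValInt p (d^2) = 2 * padicValInt p d := by
      rw [sq, padicValInt.mul hd0 hd0]; ring
    have hd4 : (p:ℤ)^4 ∣ d^2 := by
      have h2 : (p:ℤ)^2 ∣ d := (padicValInt_dvd_iff 2 d).mpr (Or.inr (by omega))
      have := pow_dvd_pow_of_dvd h2 2
      rwa [← pow_mul] at this
    apply hnot
    have : c^3 = d^2 - k * B^2 := by linarith [hP]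
    rw [this]
    exact dvd_sub hd4 hB4
end

section
/- Let d, c, k, B be integers with d² = c³ + kB² and let p be an odd prime. It is impossible to have simultaneously v_p(B) = 2 and v_p(c) = 1. -/
theorem aux_dvd_of_padic (p : ℕ) [Fact p.Prime] (z : ℤ) (hz : z ≠ 0) (n : ℕ)
    (h : n ≤ padicValInt p z) : (p : ℤ) ^ n ∣ z := by
  unfold padicValInt at h
  have : p ^ n ∣ z.natAbs := by
    rw [padicValNat_dvd_iff_le (Int.natAbs_ne_zero.mpr hz)]
    exact h
  rw [← Int.natAbs_dvd_natAbs, Int.natAbs_pow, Int.natAbs_natCast]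
  exact this

theorem aux_not_dvd_of_padic (p : ℕ) [Fact p.Prime] (z : ℤ) (hz : z ≠ 0) (n : ℕ)
    (h : padicValInt p z < n) : ¬ (p : ℤ) ^ n ∣ z := by
  unfold padicValInt at h
  intro hdvd
  have : (p : ℕ) ^ n ∣ z.natAbs := by
    rw [← Int.natAbs_dvd_natAbs, Int.natAbs_pow, Int.natAbs_natCast] at hdvd
    exact hdvd
  rw [padicValNat_dvd_iff_le (Int.natAbs_ne_zero.mpr hz)] at this
  omega

/-- For integers with `d² = c³ + kB²` and `p` an odd prime, it is impossible
to have `v_p(B) = 2` and `v_p(c) = 1` simultaneously. -/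
theorem not_val_two_and_one (d c k B : ℤ) (p : ℕ) (hp : p.Prime) (hodd : Odd p)
    (hP : d^2 = c^3 + k*B^2) :
    ¬ (padicValInt p B = 2 ∧ padicValInt p c = 1) := by
  haveI : Fact p.Prime := ⟨hp⟩
  rintro ⟨hB, hc⟩
  have hB0 : B ≠ 0 := by rintro rfl; simp [padicValInt.zero] at hB
  have hc0 : c ≠ 0 := by rintro rfl; simp [padicValInt.zero] at hc
  have hpI : Prime (p : ℤ) := Nat.prime_iff_prime_int.mp hp
  have hp0 : (p : ℤ) ≠ 0 := by exact_mod_cast hp.ne_zero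
  -- p² ∣ B
  have hB2 : (p : ℤ) ^ 2 ∣ B := aux_dvd_of_padic p B hB0 2 (by omega)
  -- p ∣ c, p² ∤ c
  have hc1 : (p : ℤ) ∣ c := by
    have := aux_dvd_of_padic p c hc0 1 (by omega); simpa using this
  have hc2 : ¬ (p : ℤ) ^ 2 ∣ c := aux_not_dvd_of_padic p c hc0 2 (by omega)
  obtain ⟨u, rfl⟩ := hc1
  have hpu : ¬ (p : ℤ) ∣ u := by
    rintro ⟨v, rfl⟩
    exact hc2 ⟨v, by ring⟩
  -- p⁴ ∣ k * B²
  have hkB : (p : ℤ) ^ 4 ∣ k * B ^ 2 := by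
    obtain ⟨b, rfl⟩ := hB2
    exact ⟨k * b ^ 2, by ring⟩
  -- p³ ∣ d²
  have hd2 : (p : ℤ) ^ 3 ∣ d ^ 2 := by
    rw [hP]
    exact dvd_add ⟨u ^ 3, by ring⟩ ((pow_dvd_pow _ (by norm_num)).trans hkB)
  -- p² ∣ d
  have hpd : (p : ℤ) ∣ d := hpI.dvd_of_dvd_pow (dvd_trans (dvd_pow_self _ (by norm_num)) hd2)
  obtain ⟨e, rfl⟩ := hpd
  have hpe : (p : ℤ) ∣ e := by
    have h1 : (p : ℤ) ^ 3 ∣ (p : ℤ) ^ 2 * e ^ 2 := by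
      convert hd2 using 1; ring
    have h2 : (p : ℤ) ∣ e ^ 2 := by
      rcases h1 with ⟨w, hw⟩
      refine ⟨w, ?_⟩
      have := mul_left_cancel₀ (pow_ne_zero 2 hp0) (by linear_combination hw :
        (p : ℤ) ^ 2 * e ^ 2 = (p : ℤ) ^ 2 * ((p:ℤ) * w))
      linarith [this]
    exact hpI.dvd_of_dvd_pow h2
  obtain ⟨f, rfl⟩ := hpe
  -- p⁴ ∣ c³
  have hc3 : (p : ℤ) ^ 4 ∣ ((p : ℤ) * u) ^ 3 := by
    have : ((p:ℤ) * ((p:ℤ) * f)) ^ 2 - k * B ^ 2 = ((p:ℤ) * u) ^ 3 := by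
      linear_combination hP
    rw [← this]
    exact dvd_sub ⟨f ^ 2, by ring⟩ hkB
  -- contradiction: p ∣ u
  apply hpu
  apply hpI.dvd_of_dvd_pow (n := 3)
  rcases hc3 with ⟨w, hw⟩
  refine ⟨w, ?_⟩
  have hexp : ((p:ℤ)*u)^3 = (p:ℤ)^3 * u^3 := by ring
  have h4 : (p:ℤ)^4 * w = (p:ℤ)^3 * ((p:ℤ) * w) := by ring
  rw [hexp, h4] at hw
  exact mul_left_cancel₀ (pow_ne_zero 3 hp0) hw
end

section
/- Let b, c, k, B be integers with c ≠ 0 and c²(3b² − 4c) = −4kB², and suppose k is squarefree. Then c divides 2B, and 12c = (3b)² + 3k(2B/c)². -/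
lemma aux_sq_dvd (c m k : ℤ) (hc : c ≠ 0) (hk : Squarefree k)
    (h : c ^ 2 ∣ k * m ^ 2) : c ∣ m := by
  have hg : 0 < Int.gcd c m := Int.gcd_pos_of_ne_zero_left m hc
  set g : ℤ := (Int.gcd c m : ℤ) with hgdef
  have hgne : g ≠ 0 := by rw [hgdef]; exact_mod_cast hg.ne'
  have hgc : g ∣ c := Int.gcd_dvd_left c m
  have hgm : g ∣ m := Int.gcd_dvd_right c m
  obtain ⟨c', hc'⟩ := hgc
  obtain ⟨m', hm'⟩ := hgm
  have hcop : IsCoprime c' m' := by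
    rw [Int.isCoprime_iff_gcd_eq_one]
    have hc'' : c' = c / g := by rw [hc']; exact (Int.mul_ediv_cancel_left _ hgne).symm
    have hm'' : m' = m / g := by rw [hm']; exact (Int.mul_ediv_cancel_left _ hgne).symm
    rw [hc'', hm'']
    exact_mod_cast Int.gcd_div_gcd_div_gcd hg
  have h2 : c' ^ 2 ∣ k * m' ^ 2 := by
    have : g ^ 2 * c' ^ 2 ∣ g ^ 2 * (k * m' ^ 2) := by
      have := h
      rw [hc', hm'] at this
      calc g ^ 2 * c' ^ 2 = (g * c') ^ 2 := by ring
        _ ∣ k * (g * m') ^ 2 := this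
        _ = g ^ 2 * (k * m' ^ 2) := by ring
    exact (mul_dvd_mul_iff_left (pow_ne_zero 2 hgne)).mp this
  have h3 : c' ^ 2 ∣ k := (hcop.pow).dvd_of_dvd_mul_right h2
  have hu : IsUnit c' := hk c' (by rwa [← sq])
  obtain ⟨u, hu'⟩ := hu.exists_right_inv
  have : c ∣ g := ⟨u, by rw [hc', mul_assoc, hu', mul_one]⟩
  exact this.trans ⟨m', hm'⟩

/-- If `k` is squarefree, `c ≠ 0` and `c²(3b² − 4c) = −4kB²`, then
`c ∣ 2B` and `12c = (3b)² + 3k(2B/c)²`. -/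
theorem reducible_disc_identity (b c k B : ℤ) (hc : c ≠ 0)
    (hk : Squarefree k) (hdisc : c^2 * (3*b^2 - 4*c) = -4*k*B^2) :
    c ∣ 2*B ∧ 12*c = (3*b)^2 + 3*k*(2*B/c)^2 := by
  have hdvd : c ∣ 2 * B := by
    apply aux_sq_dvd c (2 * B) k hc hk
    refine ⟨-(3 * b ^ 2 - 4 * c), ?_⟩
    have : k * (2 * B) ^ 2 = -(-4 * k * B ^ 2) := by ring
    rw [this, ← hdisc]; ring
  refine ⟨hdvd, ?_⟩
  obtain ⟨t, ht⟩ := hdvd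
  have htdiv : 2 * B / c = t := by rw [ht]; exact Int.mul_ediv_cancel_left _ hc
  rw [htdiv]
  have key : 3 * b ^ 2 - 4 * c = -k * t ^ 2 := by
    have h1 : c ^ 2 * (3 * b ^ 2 - 4 * c) = c ^ 2 * (-k * t ^ 2) := by
      rw [hdisc]
      have h4 : (2 * B) ^ 2 = (c * t) ^ 2 := by rw [ht]
      have h5 : 4 * B ^ 2 = c ^ 2 * t ^ 2 := by linear_combination h4
      linear_combination -k * h5
    exact mul_left_cancel₀ (pow_ne_zero 2 hc) h1
  nlinarith [key]
end

section
/- For every real K with 1 ≤ K ≤ N, the number of integers B with 1 ≤ B ≤ N whose cube-full part is at least K is O(N K^{−2/5}). Here the cube-full part of B is ∏_{p: p³ ∣ B} p^{v_p(B)}. -/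
/-- The cube-full part of a positive integer `B`:
`∏_{p³ ∣ B} p^{v_p(B)}`. -/
def cubefullPart (B : ℕ) : ℕ :=
  ∏ p ∈ B.primeFactors.filter (fun p => p^3 ∣ B), p ^ B.factorization p

lemma cubefullPart_dvd (B : ℕ) : cubefullPart B ∣ B := by
  rcases eq_or_ne B 0 with rfl | hB
  · exact dvd_zero _
  · have h1 : cubefullPart B ∣ ∏ p ∈ B.primeFactors, p ^ B.factorization p :=
      Finset.prod_dvd_prod_of_subset _ _ _ (Finset.filter_subset _ _)
    have h2 : ∏ p ∈ B.primeFactors, p ^ B.factorization p = B := by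
      have h3 := Nat.factorization_prod_pow_eq_self hB
      rwa [Finsupp.prod, Nat.support_factorization] at h3
    rwa [h2] at h1

lemma exists_cube_witness (B : ℕ) (hB : 0 < B) :
    ∃ d : ℕ, 0 < d ∧ d ^ 3 ∣ B ∧ cubefullPart B ≤ d ^ 5 := by
  set S := B.primeFactors.filter (fun p => p^3 ∣ B) with hS
  refine ⟨∏ p ∈ S, p ^ (B.factorization p / 3), ?_, ?_, ?_⟩
  · apply Finset.prod_pos
    intro p hp
    have hp' : p.Prime := Nat.prime_of_mem_primeFactors (Finset.mem_filter.mp hp).1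
    exact pow_pos hp'.pos _
  · have h1 : (∏ p ∈ S, p ^ (B.factorization p / 3)) ^ 3
        = ∏ p ∈ S, p ^ (B.factorization p / 3 * 3) := by
      rw [← Finset.prod_pow]
      exact Finset.prod_congr rfl (fun p _ => by rw [← pow_mul])
    rw [h1]
    have h2 : (∏ p ∈ S, p ^ (B.factorization p / 3 * 3)) ∣ cubefullPart B := by
      apply Finset.prod_dvd_prod_of_dvd
      intro p _
      exact pow_dvd_pow p (Nat.div_mul_le_self _ 3)
    exact h2.trans (cubefullPart_dvd B)
  · have h1 : (∏ p ∈ S, p ^ (B.factorization p / 3)) ^ 5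
        = ∏ p ∈ S, p ^ (B.factorization p / 3 * 5) := by
      rw [← Finset.prod_pow]
      exact Finset.prod_congr rfl (fun p _ => by rw [← pow_mul])
    rw [h1]
    apply Finset.prod_le_prod'
    intro p hp
    obtain ⟨hp1, hp2⟩ := Finset.mem_filter.mp hp
    have hp' : p.Prime := Nat.prime_of_mem_primeFactors hp1
    have h3 : 3 ≤ B.factorization p :=
      (hp'.pow_dvd_iff_le_factorization hB.ne').mp hp2
    exact Nat.pow_le_pow_right hp'.pos (by omega)

lemma tele_sum (D : ℕ) (hD : 2 ≤ D) (n : ℕ) :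
    ∑ i ∈ Finset.range n, (1:ℝ)/((D:ℝ)+i)^3
      ≤ 1/(2*((D:ℝ)-1)^2) - 1/(2*((D:ℝ)-1+n)^2) := by
  induction n with
  | zero => simp
  | succ n ih =>
    rw [Finset.sum_range_succ]
    have hx : (2:ℝ) ≤ (D:ℝ) := by exact_mod_cast hD
    have hn : (0:ℝ) ≤ (n:ℝ) := Nat.cast_nonneg n
    have key : (1:ℝ)/((D:ℝ)+n)^3
        ≤ 1/(2*((D:ℝ)-1+n)^2) - 1/(2*((D:ℝ)-1+(n+1))^2) := by
      set x : ℝ := (D:ℝ) + n with hxdef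
      have hx2 : (2:ℝ) ≤ x := by simp [hxdef]; linarith
      have h1 : (0:ℝ) < x - 1 := by linarith
      have h2 : (0:ℝ) < x := by linarith
      have h3 : ((D:ℝ)-1+(n+1)) = x := by ring
      have h4 : ((D:ℝ)-1+n) = x - 1 := by ring
      rw [h3, h4]
      rw [div_sub_div _ _ (by positivity) (by positivity), div_le_div_iff₀ (by positivity) (by positivity)]
      ring_nf
      nlinarith [sq_nonneg x, sq_nonneg (x-1), mul_pos h1 h2, sq_nonneg (x*(x-1))]
    push_cast
    push_cast at ih key
    linarith

/-- The number of `1 ≤ B ≤ N` whose cube-full part is at least `K`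
is `O(N·K^{−2/5})`, uniformly over real `1 ≤ K ≤ N`. -/
theorem count_large_cubefull_part :
    ∃ C : ℝ, 0 < C ∧ ∀ (N : ℕ) (K : ℝ), 1 ≤ K → K ≤ N →
      (((Finset.Icc 1 N).filter (fun B => K ≤ (cubefullPart B : ℝ))).card : ℝ)
        ≤ C * N * K ^ (-(2 : ℝ)/5) := by
  refine ⟨8, by norm_num, ?_⟩
  intro N K hK1 hKN
  have hK0 : (0:ℝ) < K := by linarith
  have hNpos : (0:ℝ) ≤ (N:ℝ) := Nat.cast_nonneg N
  have hKr : (0:ℝ) < K ^ (-(2:ℝ)/5) := Real.rpow_pos_of_pos hK0 _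
  have hquarter : K ≤ 32 → (1:ℝ)/4 ≤ K ^ (-(2:ℝ)/5) := by
    intro hKsmall
    have h1 : K ^ ((2:ℝ)/5) ≤ (32:ℝ) ^ ((2:ℝ)/5) :=
      Real.rpow_le_rpow hK0.le hKsmall (by norm_num)
    have h2 : (32:ℝ) ^ ((2:ℝ)/5) = 4 := by
      rw [show (32:ℝ) = (2:ℝ)^(5:ℕ) by norm_num, ← Real.rpow_natCast 2 5,
        ← Real.rpow_mul (by norm_num), show ((5:ℕ):ℝ) * ((2:ℝ)/5) = ((2:ℕ):ℝ) by push_cast; ring,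
        Real.rpow_natCast]
      norm_num
    rw [h2] at h1
    have hpos : (0:ℝ) < K ^ ((2:ℝ)/5) := Real.rpow_pos_of_pos hK0 _
    rw [show -(2:ℝ)/5 = -((2:ℝ)/5) by ring, Real.rpow_neg hK0.le]
    rw [show (1:ℝ)/4 = (4:ℝ)⁻¹ by norm_num]
    exact inv_anti₀ hpos h1
  by_cases hKsmall : K ≤ 32
  · -- trivial bound: card ≤ N, and K^{-2/5} ≥ 32^{-2/5} = 1/4
    have hcard : (((Finset.Icc 1 N).filter (fun B => K ≤ (cubefullPart B : ℝ))).card : ℝ) ≤ N := by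
      have := Finset.card_filter_le (Finset.Icc 1 N) (fun B => K ≤ (cubefullPart B : ℝ))
      have h2 : (Finset.Icc 1 N).card = N := by rw [Nat.card_Icc]; omega
      exact_mod_cast le_trans this (le_of_eq h2)
    have hq := hquarter hKsmall
    calc (((Finset.Icc 1 N).filter (fun B => K ≤ (cubefullPart B : ℝ))).card : ℝ)
        ≤ N := hcard
      _ ≤ 8 * N * K ^ (-(2:ℝ)/5) := by nlinarith
  · -- main case: K > 32
    push_neg at hKsmall
    set D : ℕ := ⌈K ^ ((1:ℝ)/5)⌉₊ with hDdef
    have hK15pos : (0:ℝ) < K ^ ((1:ℝ)/5) := Real.rpow_pos_of_pos hK0 _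
    have hK15 : (2:ℝ) ≤ K ^ ((1:ℝ)/5) := by
      have h1 : (32:ℝ) ^ ((1:ℝ)/5) ≤ K ^ ((1:ℝ)/5) :=
        Real.rpow_le_rpow (by norm_num) hKsmall.le (by norm_num)
      have h2 : (32:ℝ) ^ ((1:ℝ)/5) = 2 := by
        rw [show (32:ℝ) = (2:ℝ)^(5:ℕ) by norm_num, ← Real.rpow_natCast 2 5,
          ← Real.rpow_mul (by norm_num), show ((5:ℕ):ℝ) * ((1:ℝ)/5) = ((1:ℕ):ℝ) by push_cast; ring,
          Real.rpow_natCast]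
        norm_num
      linarith [h1, h2.symm.le, h2.le]
    have hDlb : K ^ ((1:ℝ)/5) ≤ (D:ℝ) := Nat.le_ceil _
    have hD2 : 2 ≤ D := by
      have : (2:ℝ) ≤ (D:ℝ) := le_trans hK15 hDlb
      exact_mod_cast this
    have hD1 : K ^ ((1:ℝ)/5) / 2 ≤ (D:ℝ) - 1 := by
      have : (1:ℝ) ≤ K ^ ((1:ℝ)/5) / 2 := by linarith
      linarith
    -- subset of a biUnion of multiples of d^3
    have hsub : (Finset.Icc 1 N).filter (fun B => K ≤ (cubefullPart B : ℝ)) ⊆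
        (Finset.Icc D N).biUnion (fun d => (Finset.Icc 1 N).filter (fun B => d^3 ∣ B)) := by
      intro B hB
      obtain ⟨hBmem, hBK⟩ := Finset.mem_filter.mp hB
      obtain ⟨hB1, hBN⟩ := Finset.mem_Icc.mp hBmem
      obtain ⟨d, hd0, hd3, hd5⟩ := exists_cube_witness B (by omega)
      have hKd5 : K ≤ ((d:ℝ))^(5:ℕ) := by
        refine le_trans hBK ?_
        exact_mod_cast hd5
      have hdD : D ≤ d := by
        rw [hDdef]
        rw [Nat.ceil_le]
        have h1 : K ^ ((1:ℝ)/5) ≤ (((d:ℝ))^(5:ℕ)) ^ ((1:ℝ)/5) :=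
          Real.rpow_le_rpow hK0.le hKd5 (by norm_num)
        have h2 : (((d:ℝ))^(5:ℕ)) ^ ((1:ℝ)/5) = (d:ℝ) := by
          rw [← Real.rpow_natCast (d:ℝ) 5, ← Real.rpow_mul (Nat.cast_nonneg d),
            show ((5:ℕ):ℝ) * ((1:ℝ)/5) = ((1:ℕ):ℝ) by push_cast; ring, Real.rpow_natCast]
          norm_num
        rw [h2] at h1
        exact h1
      have hdN : d ≤ N := by
        have h1 : d ≤ d^3 := Nat.le_self_pow (by norm_num) d
        have h2 : d^3 ≤ B := Nat.le_of_dvd (by omega) hd3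
        omega
      exact Finset.mem_biUnion.mpr ⟨d, Finset.mem_Icc.mpr ⟨hdD, hdN⟩,
        Finset.mem_filter.mpr ⟨hBmem, hd3⟩⟩
    have hcount : ∀ d : ℕ, ((Finset.Icc 1 N).filter (fun B => d^3 ∣ B)).card = N / d^3 := by
      intro d
      have : Finset.Icc 1 N = Finset.Ioc 0 N := rfl
      rw [this]
      exact Nat.Ioc_filter_dvd_card_eq_div N (d^3)
    have hcard1 : (((Finset.Icc 1 N).filter (fun B => K ≤ (cubefullPart B : ℝ))).card : ℝ)
        ≤ ∑ d ∈ Finset.Icc D N, ((N / d^3 : ℕ) : ℝ) := by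
      have h1 := Finset.card_le_card hsub
      have h2 := Finset.card_biUnion_le (s := Finset.Icc D N)
        (t := fun d => (Finset.Icc 1 N).filter (fun B => d^3 ∣ B))
      have h3 : (((Finset.Icc 1 N).filter (fun B => K ≤ (cubefullPart B : ℝ))).card : ℕ)
          ≤ ∑ d ∈ Finset.Icc D N, (N / d^3 : ℕ) := by
        calc _ ≤ _ := h1
          _ ≤ _ := h2
          _ = _ := Finset.sum_congr rfl (fun d _ => hcount d)
      exact_mod_cast h3
    have hcard2 : ∑ d ∈ Finset.Icc D N, ((N / d^3 : ℕ) : ℝ)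
        ≤ (N:ℝ) * ∑ i ∈ Finset.range (N + 1 - D), (1:ℝ)/((D:ℝ)+i)^3 := by
      rw [Finset.mul_sum]
      rw [show Finset.Icc D N = Finset.Ico D (N+1) from (Finset.Ico_add_one_right_eq_Icc D N).symm,
        Finset.sum_Ico_eq_sum_range]
      apply Finset.sum_le_sum
      intro i _
      have hpos : (0:ℝ) < ((D:ℝ)+i) := by
        have : (2:ℝ) ≤ (D:ℝ) := by exact_mod_cast hD2
        positivity
      calc ((N / (D+i)^3 : ℕ) : ℝ) ≤ (N:ℝ) / (((D+i)^3 : ℕ) : ℝ) := Nat.cast_div_le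
        _ = (N:ℝ) * ((1:ℝ)/((D:ℝ)+i)^3) := by push_cast; ring
    have htele := tele_sum D hD2 (N + 1 - D)
    have hDpos : (0:ℝ) < (D:ℝ) - 1 := by
      have : (2:ℝ) ≤ (D:ℝ) := by exact_mod_cast hD2
      linarith
    have hlastpos : (0:ℝ) < (D:ℝ) - 1 + (N + 1 - D : ℕ) := by positivity
    have hsum : ∑ i ∈ Finset.range (N + 1 - D), (1:ℝ)/((D:ℝ)+i)^3
        ≤ 1/(2*((D:ℝ)-1)^2) := by
      have h0 : (0:ℝ) ≤ 1/(2*((D:ℝ)-1+(N + 1 - D : ℕ))^2) := by positivity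
      linarith
    -- now bound 1/(2(D-1)^2) by 2 * K^(-2/5)
    have hsq : (K ^ ((1:ℝ)/5))^(2:ℕ) = K ^ ((2:ℝ)/5) := by
      rw [← Real.rpow_natCast (K ^ ((1:ℝ)/5)) 2, ← Real.rpow_mul hK0.le]
      norm_num
    have hKneg : K ^ (-(2:ℝ)/5) = (K ^ ((2:ℝ)/5))⁻¹ := by
      rw [show -(2:ℝ)/5 = -((2:ℝ)/5) by ring, Real.rpow_neg hK0.le]
    have hfinal : 1/(2*((D:ℝ)-1)^2) ≤ 2 * K ^ (-(2:ℝ)/5) := by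
      have h1 : (K ^ ((1:ℝ)/5) / 2)^2 ≤ ((D:ℝ)-1)^2 := by
        apply pow_le_pow_left₀ (by positivity) hD1
      have h2 : (0:ℝ) < (K ^ ((1:ℝ)/5) / 2)^2 := by positivity
      have h3 : 1/(2*((D:ℝ)-1)^2) ≤ 1/(2*(K ^ ((1:ℝ)/5) / 2)^2) := by
        apply div_le_div_of_nonneg_left (by norm_num) (by positivity) (by nlinarith)
      have h4 : 1/(2*(K ^ ((1:ℝ)/5) / 2)^2) = 2 * ((K ^ ((1:ℝ)/5))^(2:ℕ))⁻¹ := by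
        field_simp
      rw [h4, hsq, ← hKneg] at h3
      exact h3
    have hKr2 : (0:ℝ) ≤ K ^ (-(2:ℝ)/5) := hKr.le
    calc (((Finset.Icc 1 N).filter (fun B => K ≤ (cubefullPart B : ℝ))).card : ℝ)
        ≤ ∑ d ∈ Finset.Icc D N, ((N / d^3 : ℕ) : ℝ) := hcard1
      _ ≤ (N:ℝ) * ∑ i ∈ Finset.range (N + 1 - D), (1:ℝ)/((D:ℝ)+i)^3 := hcard2
      _ ≤ (N:ℝ) * (1/(2*((D:ℝ)-1)^2)) := by
          apply mul_le_mul_of_nonneg_left hsum hNpos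
      _ ≤ (N:ℝ) * (2 * K ^ (-(2:ℝ)/5)) := mul_le_mul_of_nonneg_left hfinal hNpos
      _ ≤ 8 * N * K ^ (-(2:ℝ)/5) := by nlinarith
end

section
/- Let k, B, c, d, M be integers with d² = c³ + kB², M ∣ B, M > 0, gcd(c, M) = 1, and w an integer with cw ≡ d (mod M²). Define F(x,y) = (1/M²)·f(Mx + wy, y) where f(x,y) = x³ − 3cxy² + 2dy³. Then F is an integer-matrix binary cubic form with F(1,0) = M and discriminant Δ(F) = −4k(B/M)². -/
/-- Discriminant lowering: with `d² = c³ + kB²`, `M ∣ B`, `M > 0`,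
`gcd(c,M) = 1`, and `cw ≡ d (mod M²)`, the form
`F(x,y) = M⁻²·f(Mx+wy, y)` (where `f(x,y) = x³ − 3cxy² + 2dy³`) is an
integer-matrix binary cubic form with coefficients
`(M, w, (w²−c)/M, (w³−3cw+2d)/M²)`, satisfying `F(1,0) = M` and
`Δ(F) = −4k(B/M)²`. -/
theorem discriminant_lowered_form (k B c d M w : ℤ)
    (hP : d^2 = c^3 + k*B^2) (hM : 0 < M) (hMB : M ∣ B)
    (hcop : IsCoprime c M) (hw : c*w ≡ d [ZMOD M^2]) :
    M ∣ (w^2 - c) ∧ M^2 ∣ (w^3 - 3*c*w + 2*d) ∧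
    M*1^3 + 3*w*1^2*0 + 3*((w^2 - c)/M)*1*0^2 + ((w^3 - 3*c*w + 2*d)/M^2)*0^3
      = M ∧
    3*w^2*((w^2 - c)/M)^2 - 4*M*((w^2 - c)/M)^3
      - 4*w^3*((w^3 - 3*c*w + 2*d)/M^2)
      - M^2*((w^3 - 3*c*w + 2*d)/M^2)^2
      + 6*M*w*((w^2 - c)/M)*((w^3 - 3*c*w + 2*d)/M^2)
      = -4*k*(B/M)^2 := by
  have hMne : M ≠ 0 := hM.ne'
  have hM2ne : (M^2 : ℤ) ≠ 0 := pow_ne_zero 2 hMne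
  have ht : (M^2 : ℤ) ∣ c*w - d := dvd_sub_comm.mp hw.dvd
  have hB2 : (M^2 : ℤ) ∣ B^2 := pow_dvd_pow_of_dvd hMB 2
  -- M² ∣ w² - c
  have key1 : c^2*(w^2-c) = (c*w-d)*(c*w+d) + k*B^2 := by linear_combination hP
  have h2div : (M^2 : ℤ) ∣ w^2 - c := by
    refine (hcop.symm.pow (m := 2) (n := 2)).dvd_of_dvd_mul_left ?_
    rw [key1]
    exact dvd_add (ht.mul_right _) (hB2.mul_left k)
  -- M² ∣ w³ - 3cw + 2d
  have key2 : c^3*(w^3-3*c*w+2*d)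
      = 3*d*(c*w-d)^2 + (c*w-d)^3 + k*B^2*d + 3*k*B^2*(c*w-d) := by
    linear_combination (3*(c*w-d)+d) * hP
  have h3div : (M^2 : ℤ) ∣ w^3 - 3*c*w + 2*d := by
    refine (hcop.symm.pow (m := 2) (n := 3)).dvd_of_dvd_mul_left ?_
    rw [key2]
    obtain ⟨u, hu⟩ := ht
    obtain ⟨v, hv⟩ := hB2
    exact ⟨3*d*M^2*u^2 + M^4*u^3 + k*v*d + 3*k*M^2*v*u, by rw [hu, hv]; ring⟩
  have h1div : M ∣ w^2 - c := (dvd_pow_self M two_ne_zero).trans h2div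
  obtain ⟨e, he⟩ := h1div
  obtain ⟨f, hf⟩ := h3div
  obtain ⟨B', hB⟩ := hMB
  refine ⟨he ▸ Dvd.intro e rfl, hf ▸ Dvd.intro f rfl, ?_, ?_⟩
  · simp
  · rw [he, Int.mul_ediv_cancel_left e hMne, hf, Int.mul_ediv_cancel_left f hM2ne,
      hB, Int.mul_ediv_cancel_left B' hMne]
    have hmain : M^4 * (3*w^2*e^2 - 4*M*e^3 - 4*w^3*f - M^2*f^2 + 6*M*w*e*f)
        = M^4 * (-4*k*B'^2) := by
      linear_combination
        (M^2 * (-6*w^2*(w^2-c) + 3*w^2*((w^2-c)-M*e) + 12*(w^2-c)^2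
          - 12*(w^2-c)*((w^2-c)-M*e) + 4*((w^2-c)-M*e)^2
          - 6*w*(w^3-3*c*w+2*d) + 6*w*((w^3-3*c*w+2*d)-M^2*f))) * he
        + (M^2 * (4*w^3 + 2*(w^3-3*c*w+2*d) - ((w^3-3*c*w+2*d)-M^2*f)
          - 6*w*(w^2-c))) * hf
        + (-4*M^2) * hP
        + (-4*k*M^2*(B+M*B')) * hB
    exact mul_left_cancel₀ (pow_ne_zero 4 hMne) hmain
end

section
/- Let P = (c,d) be an integral point on y² = x³ + kB² with d² = c³ + kB², let M ∣ B with gcd(c,M) = 1, and let w satisfy cw ≡ d (mod M²). Then the Hessian covariant of F(x,y) = M⁻²·f(Mx+wy, y), where f(x,y) = x³ − 3cxy² + 2dy³, equals H(x,y) = c x² + (2(cw − d)/M) xy + ((c² + cw² − 2dw)/M²) y², and every coefficient of H is divisible by gcd(c, B). -/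
/-- The Hessian covariant of the lowered form `F(x,y) = M⁻²f(Mx+wy,y)`,
where `f(x,y) = x³ − 3cxy² + 2dy³` comes from an integral point `(c,d)` on
`y² = x³ + kB²`, equals `c·x² + (2(cw−d)/M)·xy + ((c² + cw² − 2dw)/M²)·y²`,
and every coefficient is divisible by `gcd(c,B)`. -/
theorem hessian_of_lowered_form (k B c d M w : ℤ)
    (hP : d^2 = c^3 + k*B^2) (hM : 0 < M) (hMB : M ∣ B)
    (hcop : IsCoprime c M) (hw : c*w ≡ d [ZMOD M^2]) :
    M^2 ∣ (c*w - d) ∧ M^2 ∣ (c^2 + c*w^2 - 2*d*w) ∧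
    -- the Hessian coefficients of F equal the stated expressions
    (w^2 - M*((w^2 - c)/M) = c) ∧
    (w*((w^2 - c)/M) - M*((w^3 - 3*c*w + 2*d)/M^2) = 2*(c*w - d)/M) ∧
    (((w^2 - c)/M)^2 - w*((w^3 - 3*c*w + 2*d)/M^2)
        = (c^2 + c*w^2 - 2*d*w)/M^2) ∧
    -- each coefficient is divisible by gcd(c,B)
    (Int.gcd c B : ℤ) ∣ c ∧
    (Int.gcd c B : ℤ) ∣ (2*(c*w - d)/M) ∧
    (Int.gcd c B : ℤ) ∣ ((c^2 + c*w^2 - 2*d*w)/M^2) := by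
  have hM0 : M ≠ 0 := hM.ne'
  -- M² ∣ cw − d
  obtain ⟨t, ht⟩ : M^2 ∣ c*w - d := Int.ModEq.dvd hw.symm
  -- M² ∣ w² − c
  obtain ⟨u, hu⟩ : M^2 ∣ w^2 - c := by
    obtain ⟨B', hB'⟩ := hMB
    have hdvd : M^2 ∣ c^2 * (w^2 - c) := by
      have : c^2 * (w^2 - c) = (c*w - d)*(c*w + d) + k*B^2 := by
        linear_combination hP
      rw [this, hB']
      exact dvd_add (Dvd.dvd.mul_right ⟨t, ht⟩ _) ⟨k*B'^2, by ring⟩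
    exact ((hcop.pow).symm).dvd_of_dvd_mul_left hdvd
  -- exact values of the divisions
  have e1 : (w^2 - c)/M = M*u := by
    rw [hu, pow_two, mul_assoc, Int.mul_ediv_cancel_left _ hM0]
  have e2 : (w^3 - 3*c*w + 2*d)/M^2 = w*u - 2*t := by
    have : w^3 - 3*c*w + 2*d = M^2 * (w*u - 2*t) := by linear_combination w*hu - 2*ht
    rw [this, Int.mul_ediv_cancel_left _ (pow_ne_zero 2 hM0)]
  have e3 : (c^2 + c*w^2 - 2*d*w)/M^2 = 2*w*t - c*u := by
    have : c^2 + c*w^2 - 2*d*w = M^2 * (2*w*t - c*u) := by linear_combination 2*w*ht - c*hu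
    rw [this, Int.mul_ediv_cancel_left _ (pow_ne_zero 2 hM0)]
  have e4 : 2*(c*w - d)/M = 2*M*t := by
    have : 2*(c*w - d) = M * (2*M*t) := by nlinarith [ht]
    rw [this, Int.mul_ediv_cancel_left _ hM0]
  -- gcd facts
  set g : ℤ := (Int.gcd c B : ℤ) with hg
  have hgc : g ∣ c := Int.gcd_dvd_left c B
  have hgB : g ∣ B := Int.gcd_dvd_right c B
  have hgd : g ∣ d := by
    have h2 : g^2 ∣ d^2 := by
      rw [hP]
      exact dvd_add ((pow_dvd_pow_of_dvd hgc 2).trans ⟨c, by ring⟩)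
        (Dvd.dvd.mul_left (pow_dvd_pow_of_dvd hgB 2) k)
    exact (Int.pow_dvd_pow_iff two_ne_zero).mp h2
  have hgM : IsCoprime g (M^2) :=
    (IsCoprime.of_isCoprime_of_dvd_left hcop hgc).pow_right
  have hgt : g ∣ t := by
    have : g ∣ M^2 * t := by
      rw [← ht]; exact dvd_sub (hgc.mul_right w) hgd
    exact hgM.dvd_of_dvd_mul_left this
  refine ⟨⟨t, ht⟩, ⟨2*w*t - c*u, by linear_combination 2*w*ht - c*hu⟩, ?_, ?_, ?_, hgc, ?_, ?_⟩
  · rw [e1]; linear_combination hu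
  · rw [e1, e2, e4]; ring
  · rw [e1, e2, e3]; linear_combination (-u)*hu
  · rw [e4]; exact hgt.mul_left _
  · rw [e3]; exact dvd_sub (hgt.mul_left _) (hgc.mul_right u)
end
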